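/- arXiv:2207.14492 — 3 statements merged into one kernel-verified Lean document; each statement's English description precedes it below -/
import Mathlib

section
/- Let p be a rational prime, K a number field, α ∈ K, β ∈ K^×, U ∈ ℤ_(p), and 𝔭 a prime ideal of O_K above p. Suppose ord_𝔭(β·(U+α)) > ord_𝔭(β) + min{0, ord_𝔭(α)}, and let u ∈ {0,...,p-1} be the unique integer with u ≡ -α (mod 𝔭). Then U = p·U′ + u for some U′ ∈ ℤ_(p). -/
open NumberField IsDedekindDomain

/-!
The hypothesis forces `ord_𝔭(U + α) > 0`: after cancelling `β`, this is immediate when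
`ord_𝔭(α) ≥ 0`, while if `ord_𝔭(α) < 0 ≤ ord_𝔭(U)` the ultrametric inequality gives
`ord_𝔭(U + α) = ord_𝔭(α)`, a contradiction. Hence `ord_𝔭(U - u) > 0`. Since `U - u ∈ ℤ_(p)` and
`𝔭 ∩ ℤ = pℤ`, this means `p` divides the numerator of `U - u`, i.e. `U - u ∈ pℤ_(p)`.
-/

theorem Ideal.IsPrime.intCast_mem_iff_dvd {R : Type*} [CommRing R] {P : Ideal R} (hP : P.IsPrime)
    {p : ℕ} (hp : p.Prime) (hpP : (p : R) ∈ P) (n : ℤ) : (n : R) ∈ P ↔ (p : ℤ) ∣ n := by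
  have : Fact p.Prime := ⟨hp⟩
  have hcomap : P.comap (Int.castRingHom R) = Ideal.span {(p : ℤ)} :=
    ((Int.ideal_span_isMaximal_of_prime p).eq_of_le (Ideal.comap_ne_top _ hP.ne_top)
      (Ideal.span_singleton_le_iff_mem _ |>.2 (by simpa using hpP))).symm
  rw [← Ideal.mem_span_singleton, ← hcomap, Ideal.mem_comap, eq_intCast]

theorem Valuation.map_add_lt_one_of_mul_lt_mul_max {R Γ₀ : Type*} [CommRing R]
    [LinearOrderedCommGroupWithZero Γ₀] (w : Valuation R Γ₀) {x a b : R} (hx : w x ≤ 1)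
    (h : w (b * (x + a)) < w b * max 1 (w a)) : w (x + a) < 1 := by
  rw [map_mul] at h
  have hlt := lt_of_mul_lt_mul_left h zero_le
  rcases le_or_gt (w a) 1 with ha | ha
  · rwa [max_eq_left ha] at hlt
  · rw [max_eq_right ha.le, w.map_add_eq_of_lt_right (hx.trans_lt ha)] at hlt
    exact (lt_irrefl _ hlt).elim

theorem Rat.exists_eq_mul_of_dvd_num {p : ℕ} {q : ℚ} (hden : ¬ p ∣ q.den) (hnum : (p : ℤ) ∣ q.num) :
    ∃ q' : ℚ, ¬ p ∣ q'.den ∧ q = p * q' := by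
  obtain ⟨k, hk⟩ := hnum
  refine ⟨Rat.divInt k q.den, fun hd => hden ?_, ?_⟩
  · exact_mod_cast (Int.natCast_dvd_natCast.2 hd).trans (Rat.den_dvd k q.den)
  · rw [Rat.divInt_eq_div]
    nth_rw 1 [← Rat.num_div_den q]
    rw [hk]
    push_cast
    ring

namespace IsDedekindDomain.HeightOneSpectrum

variable {R : Type*} [CommRing R] [IsDedekindDomain R] {K : Type*} [Field K]
  [Algebra R K] [IsFractionRing R K] (v : HeightOneSpectrum R)

theorem valuation_intCast_le_one (n : ℤ) : v.valuation K (n : K) ≤ 1 := by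
  rw [← map_intCast (algebraMap R K), v.valuation_of_algebraMap]
  exact v.intValuation_le_one _

theorem valuation_intCast_lt_one_iff {p : ℕ} (hp : p.Prime) (hv : (p : R) ∈ v.asIdeal) (n : ℤ) :
    v.valuation K (n : K) < 1 ↔ (p : ℤ) ∣ n := by
  rw [← map_intCast (algebraMap R K), v.valuation_lt_one_iff_mem,
    v.isPrime.intCast_mem_iff_dvd hp hv]

theorem valuation_ratCast_eq_num {p : ℕ} (hp : p.Prime) (hv : (p : R) ∈ v.asIdeal) {q : ℚ}
    (hq : ¬ p ∣ q.den) : v.valuation K (q : K) = v.valuation K (q.num : K) := by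
  have hden : v.valuation K ((q.den : ℤ) : K) = 1 :=
    le_antisymm (v.valuation_intCast_le_one _) <| not_lt.1 fun h =>
      hq (by exact_mod_cast (v.valuation_intCast_lt_one_iff hp hv _).1 h)
  rw [Rat.cast_def, map_div₀, ← Int.cast_natCast, hden, div_one]

end IsDedekindDomain.HeightOneSpectrum

theorem U_eq_pU_add_u_general (K : Type*) [Field K] [NumberField K]
    (p : ℕ) (hp : p.Prime) (α β : K) (U : ℚ) (hU : ¬ p ∣ U.den)
    (v : HeightOneSpectrum (𝓞 K)) (hv : (p : 𝓞 K) ∈ v.asIdeal)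
    (h : v.valuation K (β * (algebraMap ℚ K U + α)) <
        v.valuation K β * max 1 (v.valuation K α))
    (u : ℕ) (huα : v.valuation K ((u : K) + α) < 1) :
    ∃ U' : ℚ, ¬ p ∣ U'.den ∧ U = p * U' + u := by
  rw [eq_ratCast] at h
  have hUα : v.valuation K ((U : K) + α) < 1 :=
    (v.valuation K).map_add_lt_one_of_mul_lt_mul_max
      ((v.valuation_ratCast_eq_num hp hv hU).trans_le (v.valuation_intCast_le_one _)) h
  have hden : ¬ p ∣ (U - u).den := by rwa [Rat.sub_natCast_den]
  have hsub : v.valuation K ((U - u : ℚ) : K) < 1 := by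
    rw [show ((U - u : ℚ) : K) = ((U : K) + α) - ((u : K) + α) by push_cast; ring]
    exact Valuation.map_sub_lt _ hUα huα
  rw [v.valuation_ratCast_eq_num hp hv hden, v.valuation_intCast_lt_one_iff hp hv] at hsub
  obtain ⟨U', hU', hU'eq⟩ := Rat.exists_eq_mul_of_dvd_num hden hsub
  exact ⟨U', hU', by linarith⟩

/-- Let `p` be a rational prime, `K` a number field, `α ∈ K`, `β ∈ K^×`, `U ∈ ℤ_(p)`
and `𝔭` a prime of `𝓞 K` above `p`. Suppose `ord_𝔭(β(U+α)) > ord_𝔭(β) + min{0, ord_𝔭(α)}`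
(stated multiplicatively), and let `u ∈ {0,…,p-1}` satisfy `u ≡ -α (mod 𝔭)`.
Then `U = p·U′ + u` for some `U′ ∈ ℤ_(p)`. -/
theorem U_eq_pU_add_u (K : Type*) [Field K] [NumberField K]
    (p : ℕ) (hp : p.Prime) (α β : K) (hβ : β ≠ 0) (U : ℚ) (hU : ¬ p ∣ U.den)
    (v : HeightOneSpectrum (𝓞 K)) (hv : (p : 𝓞 K) ∈ v.asIdeal)
    (h : v.valuation K (β * (algebraMap ℚ K U + α)) <
        v.valuation K β * max 1 (v.valuation K α))
    (u : ℕ) (hu : u < p) (huα : v.valuation K ((u : K) + α) < 1) :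
    ∃ U' : ℚ, ¬ p ∣ U'.den ∧ U = p * U' + u :=
  U_eq_pU_add_u_general K p hp α β U hU v hv h u huα
end

section
/- Let K be a number field, p a rational prime, and γ ∈ K a generator of K (i.e. K = ℚ(γ)). Then there exists a bound B such that for any U ∈ ℤ_(p) and any prime ideal 𝔭 of O_K over p with e(𝔭|p) ≠ 1 or f(𝔭|p) ≠ 1, one has ord_𝔭(U + γ) ≤ B. -/
/-! If `ord_𝔭(U + γ)` is unbounded as `U` runs over `ℚ`, then `γ` lies in the `𝔭`-adic closure
of `ℚ` in `K`. That closure is a `ℚ`-subalgebra, hence contains `ℚ(γ) = K`, so every integer of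
`K` is congruent modulo `𝔭²` to a rational integer. This forces `f(𝔭|p) = 1`, and also
`e(𝔭|p) = 1`: if `p ∈ 𝔭²`, an element of `𝔭 \ 𝔭²` would be congruent to an integer in `𝔭 ∩ ℤ = pℤ`,
hence would lie in `𝔭²`. Only finitely many primes lie over `p`, so the bounds at each of them
combine into one. -/

open NumberField IsDedekindDomain Ideal WithZero

namespace Valuation

section CommRing

variable {A Γ₀ : Type*} [CommRing A] [LinearOrderedCommGroupWithZero Γ₀] (w : Valuation A Γ₀)

theorem exists_forall_map_mul_lt (c : A) {ε : Γ₀} (hε : ε ≠ 0) :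
    ∃ δ ≠ 0, ∀ z, w z < δ → w (z * c) < ε := by
  by_cases hc : w c = 0
  · exact ⟨ε, hε, fun z _ ↦ by simpa [hc] using zero_lt_iff.mpr hε⟩
  · refine ⟨ε / w c, div_ne_zero hε hc, fun z hz ↦ ?_⟩
    rwa [map_mul, ← lt_div_iff₀ (zero_lt_iff.mpr hc)]

variable (F : Type*) [CommRing F] [Algebra F A]

def closureAlgebraMap : Subalgebra F A where
  carrier := {x | ∀ ε : Γ₀, ε ≠ 0 → ∃ a : F, w (x - algebraMap F A a) < ε}
  add_mem' {x y} hx hy ε hε := by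
    obtain ⟨a, ha⟩ := hx ε hε
    obtain ⟨b, hb⟩ := hy ε hε
    refine ⟨a + b, ?_⟩
    rw [map_add, add_sub_add_comm]
    exact w.map_add_lt ha hb
  mul_mem' {x y} hx hy ε hε := by
    obtain ⟨δ, hδ, hδε⟩ := w.exists_forall_map_mul_lt y hε
    obtain ⟨a, ha⟩ := hx δ hδ
    obtain ⟨δ', hδ', hδ'ε⟩ := w.exists_forall_map_mul_lt (algebraMap F A a) hε
    obtain ⟨b, hb⟩ := hy δ' hδ'
    refine ⟨a * b, ?_⟩
    have : x * y - algebraMap F A (a * b) =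
        (x - algebraMap F A a) * y + (y - algebraMap F A b) * algebraMap F A a := by
      rw [map_mul]; ring
    rw [this]
    exact w.map_add_lt (hδε _ ha) (hδ'ε _ hb)
  algebraMap_mem' a ε hε := ⟨a, by simpa using zero_lt_iff.mpr hε⟩

variable {w F}

theorem mem_closureAlgebraMap_iff {x : A} :
    x ∈ w.closureAlgebraMap F ↔ ∀ ε : Γ₀, ε ≠ 0 → ∃ a : F, w (x - algebraMap F A a) < ε :=
  Iff.rfl

end CommRing

theorem closureAlgebraMap_eq_top {F K Γ₀ : Type*} [Field F] [Field K] [Algebra F K]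
    [LinearOrderedCommGroupWithZero Γ₀] {w : Valuation K Γ₀} {γ : K}
    (hγ : IntermediateField.adjoin F {γ} = ⊤) (halg : IsAlgebraic F γ)
    (hmem : γ ∈ w.closureAlgebraMap F) : w.closureAlgebraMap F = ⊤ := by
  rw [eq_top_iff, ← IntermediateField.top_toSubalgebra, ← hγ,
    IntermediateField.adjoin_simple_toSubalgebra_of_isAlgebraic halg, Algebra.adjoin_le_iff]
  simpa using hmem

end Valuation

theorem Ideal.liesOver_span_natCast_of_mem {S : Type*} [CommRing S] (P : Ideal S) [P.IsPrime]
    {p : ℕ} [Fact p.Prime] (hpP : (p : S) ∈ P) : P.LiesOver (span {(p : ℤ)}) := by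
  refine (liesOver_iff _ _).mpr ((Int.ideal_span_isMaximal_of_prime p).eq_of_le
    (comap_ne_top _ IsPrime.ne_top') ?_)
  rw [span_le, Set.singleton_subset_iff]
  simpa using hpP

section

attribute [local instance] Ideal.Quotient.field

variable {S : Type*} [CommRing S] (P : Ideal S) {p : ℕ}
  [P.LiesOver (span {(p : ℤ)})]

theorem Ideal.inertiaDeg'_eq_one_of_forall_exists_intCast_sub_mem [Fact p.Prime]
    (h : ∀ x : S, ∃ m : ℤ, x - m ∈ P) : inertiaDeg' (span {(p : ℤ)}) P = 1 := by
  have : Nontrivial (S ⧸ P) := Quotient.nontrivial_of_liesOver_of_isPrime P (span {(p : ℤ)})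
  rw [inertiaDeg'_algebraMap]
  refine Module.finrank_of_bijective_algebraMap ⟨RingHom.injective _, fun y ↦ ?_⟩
  obtain ⟨x, rfl⟩ := Quotient.mk_surjective y
  obtain ⟨m, hm⟩ := h x
  refine ⟨Quotient.mk _ m, ?_⟩
  rw [Quotient.algebraMap_mk_of_liesOver, Quotient.eq]
  simpa using neg_mem hm

theorem Ideal.ramificationIdx'_eq_one_of_forall_exists_intCast_sub_mem_sq [IsDedekindDomain S]
    [P.IsPrime] (hP : P ≠ ⊥) (h : ∀ x : S, ∃ m : ℤ, x - m ∈ P ^ 2) :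
    ramificationIdx' (span {(p : ℤ)}) P = 1 := by
  have hle : map (algebraMap ℤ S) (span {(p : ℤ)}) ≤ P := map_le_iff_le_comap.mpr (over_def P _).le
  by_contra hne
  rw [← ne_eq, ramificationIdx'_ne_one_iff hle] at hne
  obtain ⟨π, hπ, hπ2⟩ := exists_mem_pow_notMem_pow_succ P hP IsPrime.ne_top' 1
  obtain ⟨m, hm⟩ := h π
  have hmP : (m : S) ∈ P := by
    rw [pow_one] at hπ
    simpa using P.sub_mem hπ (pow_le_self two_ne_zero hm)
  have hmp : m ∈ span {(p : ℤ)} := (mem_of_liesOver P _ m).mpr (by simpa using hmP)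
  have hm2 : (m : S) ∈ P ^ 2 := hne (by simpa using mem_map_of_mem (algebraMap ℤ S) hmp)
  exact hπ2 (by simpa using add_mem hm hm2)

end

namespace IsDedekindDomain.HeightOneSpectrum

variable {R K : Type*} [CommRing R] [IsDedekindDomain R] [Field K] [CharZero K] [Algebra R K]
  [IsFractionRing R K] (v : HeightOneSpectrum R)

theorem den_mul_sub_num_mem_pow_of_valuation_sub_ratCast_le {x : R} {n : ℕ} {q : ℚ}
    (hq : v.valuation K (algebraMap R K x - q) ≤ exp (-(n : ℤ))) :
    (q.den : R) * x - q.num ∈ v.asIdeal ^ n := by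
  have hcast : algebraMap R K ((q.den : R) * x - q.num) = q.den * (algebraMap R K x - q) := by
    rw [mul_sub, ← Rat.cast_natCast, ← Rat.cast_mul, mul_comm _ q, Rat.mul_den_eq_num]
    simp
  rw [← intValuation_le_pow_iff_mem, ← v.valuation_of_algebraMap (K := K), Algebra.cast, hcast,
    map_mul]
  refine mul_le_of_le_one_of_le ?_ hq
  simpa using v.valuation_le_one (K := K) (q.den : R)

theorem exists_intCast_sub_mem_pow_of_valuation_sub_ratCast_le (p : ℕ) [Fact p.Prime]
    [v.asIdeal.LiesOver (span {(p : ℤ)})] {x : R} {n : ℕ} (hn : n ≠ 0)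
    {q : ℚ} (hq : v.valuation K (algebraMap R K x - q) ≤ exp (-(n : ℤ))) :
    ∃ m : ℤ, x - m ∈ v.asIdeal ^ n := by
  have hmem : ∀ m : ℤ, (m : R) ∈ v.asIdeal ↔ (p : ℤ) ∣ m := fun m ↦ by
    simpa [mem_span_singleton] using (mem_of_liesOver v.asIdeal (span {(p : ℤ)}) m).symm
  have hclear := v.den_mul_sub_num_mem_pow_of_valuation_sub_ratCast_le hq
  have hden : ¬ (p : ℤ) ∣ q.den := by
    intro hdvd
    have hnum : (q.num : R) ∈ v.asIdeal := by
      have := v.asIdeal.sub_mem (v.asIdeal.mul_mem_right x ((hmem _).mpr hdvd))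
        (pow_le_self hn hclear)
      simpa using this
    have hnum' : p ∣ q.num.natAbs := Int.natCast_dvd.mp ((hmem _).mp hnum)
    exact (Fact.out : p.Prime).not_dvd_one
      (q.reduced.gcd_eq_one ▸ Nat.dvd_gcd hnum' (Int.natCast_dvd_natCast.mp hdvd))
  obtain ⟨s, t, hst⟩ : IsCoprime (q.den : ℤ) ((p : ℤ) ^ n) := by
    rw [← Nat.cast_pow, Nat.isCoprime_iff_coprime]
    refine Nat.Coprime.pow_right n (Nat.coprime_comm.mp ?_)
    exact (Nat.Prime.coprime_iff_not_dvd Fact.out).mpr (by exact_mod_cast hden)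
  -- `x ≡ s * den * x ≡ s * num` modulo `𝔭 ^ n`, as `p ^ n ∈ 𝔭 ^ n`.
  refine ⟨s * q.num, ?_⟩
  have hsplit : x - ↑(s * q.num) = s * ((q.den : R) * x - q.num) + (p : R) ^ n * (t * x) := by
    have hst' : (s : R) * q.den + t * (p : R) ^ n = 1 := by
      simpa using congrArg (Int.cast : ℤ → R) hst
    push_cast
    linear_combination (-x) * hst'
  rw [hsplit]
  exact add_mem (mul_mem_left _ _ hclear)
    (mul_mem_right _ _ (pow_mem_pow (by simpa using (hmem p).mpr dvd_rfl) n))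

end IsDedekindDomain.HeightOneSpectrum

theorem NumberField.exists_le_valuation_ratCast_add_of_ramificationIdx'_ne_one_or_inertiaDeg'_ne_one
    {K : Type*} [Field K] [NumberField K] {γ : K} (hγ : IntermediateField.adjoin ℚ {γ} = ⊤)
    (v : HeightOneSpectrum (𝓞 K)) (p : ℕ) [Fact p.Prime] [v.asIdeal.LiesOver (span {(p : ℤ)})]
    (hbad : ramificationIdx' (span {(p : ℤ)}) v.asIdeal ≠ 1 ∨
      inertiaDeg' (span {(p : ℤ)}) v.asIdeal ≠ 1) :
    ∃ B : ℤ, ∀ U : ℚ, exp (-B) ≤ v.valuation K (algebraMap ℚ K U + γ) := by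
  by_contra! H
  have hγmem : γ ∈ (v.valuation K).closureAlgebraMap ℚ := fun ε hε ↦ by
    obtain ⟨U, hU⟩ := H (-ε.log)
    rw [neg_neg, exp_log hε] at hU
    exact ⟨-U, by simpa [add_comm] using hU⟩
  have hdense := Valuation.closureAlgebraMap_eq_top hγ (IsAlgebraic.of_finite ℚ γ) hγmem
  have hsq : ∀ x : 𝓞 K, ∃ m : ℤ, x - m ∈ v.asIdeal ^ 2 := fun x ↦ by
    have hx : algebraMap (𝓞 K) K x ∈ (v.valuation K).closureAlgebraMap ℚ :=
      hdense ▸ Algebra.mem_top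
    obtain ⟨q, hq⟩ := Valuation.mem_closureAlgebraMap_iff.mp hx (exp (-2)) exp_ne_zero
    exact v.exists_intCast_sub_mem_pow_of_valuation_sub_ratCast_le p two_ne_zero hq.le
  rcases hbad with he | hf
  · exact he (ramificationIdx'_eq_one_of_forall_exists_intCast_sub_mem_sq v.asIdeal v.ne_bot hsq)
  · exact hf (inertiaDeg'_eq_one_of_forall_exists_intCast_sub_mem v.asIdeal
      fun x ↦ (hsq x).imp fun _ hm ↦ pow_le_self two_ne_zero hm)

/-- Let `K = ℚ(γ)` be a number field and `p` a rational prime. Then there is a bound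
`B` such that for every `U ∈ ℤ_(p)` and every prime `𝔭` of `𝓞 K` above `p` with
`e(𝔭|p) ≠ 1` or `f(𝔭|p) ≠ 1`, we have `ord_𝔭(U + γ) ≤ B` (stated multiplicatively:
the valuation of `U + γ` is at least `ofAdd (-B)`). -/
theorem bounded_valuation_ramified_or_inert (K : Type*) [Field K] [NumberField K]
    (p : ℕ) (hp : p.Prime) (γ : K) (hγ : IntermediateField.adjoin ℚ {γ} = ⊤) :
    ∃ B : ℤ, ∀ U : ℚ, ¬ p ∣ U.den →
      ∀ v : HeightOneSpectrum (𝓞 K), (p : 𝓞 K) ∈ v.asIdeal →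
        (Ideal.ramificationIdx' (Ideal.span {(p : ℤ)}) v.asIdeal ≠ 1 ∨
          Ideal.inertiaDeg' (Ideal.span {(p : ℤ)}) v.asIdeal ≠ 1) →
        ((Multiplicative.ofAdd (-B) : Multiplicative ℤ) : WithZero (Multiplicative ℤ)) ≤
          v.valuation K (algebraMap ℚ K U + γ) := by
  have : Fact p.Prime := ⟨hp⟩
  set S := {v : HeightOneSpectrum (𝓞 K) | (p : 𝓞 K) ∈ v.asIdeal ∧
    (ramificationIdx' (span {(p : ℤ)}) v.asIdeal ≠ 1 ∨ inertiaDeg' (span {(p : ℤ)}) v.asIdeal ≠ 1)}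
  have hS : S.Finite :=
    (finite_factors (by simpa using hp.ne_zero)).subset fun v hv ↦ dvd_span_singleton.mpr hv.1
  have hbound : ∀ v ∈ S, ∃ B : ℤ, ∀ U : ℚ, exp (-B) ≤ v.valuation K (algebraMap ℚ K U + γ) :=
    fun v ⟨hpv, hbad⟩ ↦
      have := liesOver_span_natCast_of_mem v.asIdeal hpv
      exists_le_valuation_ratCast_add_of_ramificationIdx'_ne_one_or_inertiaDeg'_ne_one hγ v p hbad
  choose! B hB using hbound
  obtain ⟨M, hM⟩ := (hS.image B).bddAbove
  exact ⟨M, fun U _ v hpv hbad ↦ (exp_le_exp.mpr (neg_le_neg (hM ⟨v, ⟨hpv, hbad⟩, rfl⟩))).trans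
    (hB v ⟨hpv, hbad⟩ U)⟩
end

section
/- Let L be a number field of degree D, 𝔖 a finite set of finite places of L, and ε an 𝔖-unit (i.e. ε ∈ O_𝔖^×). Let η ∈ M_L be a place of L chosen so that ‖ε‖_η is minimal among all places. Then ‖ε‖_η ≤ 1 and h(ε) ≤ ((#M_L^∞ + #𝔖)/D) · log(‖ε^{-1}‖_η). -/
open NumberField IsDedekindDomain

/-- The normalized absolute value `‖x‖_ν = |x|_ν^{D_ν}` of `x` at a place `ν` of the
number field `L`: at an infinite place `w` it is `w(x)^{mult w}`, and at a finite
place `v` (a height-one prime of `𝓞 L`) it is `Norm(𝔭)^{-ord_v x}` (and `0` at `x = 0`). -/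
noncomputable def placeNorm (L : Type*) [Field L] [NumberField L] :
    (InfinitePlace L ⊕ HeightOneSpectrum (𝓞 L)) → L → ℝ
  | Sum.inl w => fun x => (w x) ^ w.mult
  | Sum.inr v => fun x =>
      if hx : v.valuation L x = 0 then 0
      else (Ideal.absNorm v.asIdeal : ℝ) ^ (Multiplicative.toAdd (WithZero.unzero hx))

/-- The absolute logarithmic height
`h(x) = (1/[L:ℚ]) ∑_ν log max {1, ‖x‖_ν}`, summing over all places of `L`. -/
noncomputable def absLogHeight (L : Type*) [Field L] [NumberField L] (x : L) : ℝ :=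
  (Module.finrank ℚ L : ℝ)⁻¹ *
    ∑ᶠ ν : InfinitePlace L ⊕ HeightOneSpectrum (𝓞 L),
      Real.log (max 1 (placeNorm L ν x))

/-!
An `𝔖`-unit `ε` has `‖ε‖_ν = 1` outside `S = M_L^∞ ⊔ 𝔖`, so the product formula reads
`∏_{ν ∈ S} ‖ε‖_ν = 1`. If `m = ‖ε‖_η` is the smallest of these factors, then
`m ≤ 1`, and every factor satisfies `max 1 ‖ε‖_ν ≤ ‖ε‖_ν / m`; taking logarithms and summing over
`S`, the terms `log ‖ε‖_ν` cancel and leave `D · h(ε) ≤ #S · log m⁻¹`.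
-/

namespace Finset

variable {ι : Type*} {s : Finset ι} {f : ι → ℝ} {m : ℝ}

theorem le_one_of_forall_le_of_prod_eq_one (hs : s.Nonempty) (hm₀ : 0 ≤ m)
    (hm : ∀ i ∈ s, m ≤ f i) (hf : ∏ i ∈ s, f i = 1) : m ≤ 1 := by
  have : m ^ #s ≤ 1 := by
    rw [← hf, ← prod_const]
    exact prod_le_prod (fun _ _ => hm₀) hm
  exact (pow_le_one_iff_of_nonneg hm₀ hs.card_pos.ne').mp this

theorem sum_log_max_one_le_card_mul_log_inv (hm₀ : 0 < m) (hm₁ : m ≤ 1)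
    (hm : ∀ i ∈ s, m ≤ f i) (hf : ∏ i ∈ s, f i = 1) :
    ∑ i ∈ s, Real.log (max 1 (f i)) ≤ #s * Real.log m⁻¹ := by
  have hpos : ∀ i ∈ s, 0 < f i := fun i hi => hm₀.trans_le (hm i hi)
  have hterm : ∀ i ∈ s, Real.log (max 1 (f i)) ≤ Real.log (f i) + Real.log m⁻¹ := by
    intro i hi
    rw [← Real.log_mul (hpos i hi).ne' (inv_ne_zero hm₀.ne')]
    refine Real.log_le_log (lt_max_of_lt_left one_pos) (max_le ?_ ?_)
    · rw [← div_eq_mul_inv, one_le_div hm₀]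
      exact hm i hi
    · exact le_mul_of_one_le_right (hpos i hi).le (one_le_inv₀ hm₀ |>.mpr hm₁)
  have hlog : ∑ i ∈ s, Real.log (f i) = 0 := by
    rw [← Real.log_prod fun i hi => (hpos i hi).ne', hf, Real.log_one]
  calc ∑ i ∈ s, Real.log (max 1 (f i))
      ≤ ∑ i ∈ s, (Real.log (f i) + Real.log m⁻¹) := sum_le_sum hterm
    _ = #s * Real.log m⁻¹ := by rw [sum_add_distrib, hlog, sum_const, nsmul_eq_mul, zero_add]

end Finset

section placeNorm

variable {L : Type*} [Field L] [NumberField L]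

theorem placeNorm_inr_eq_finitePlace (v : HeightOneSpectrum (𝓞 L)) (x : L) :
    placeNorm L (.inr v) x = FinitePlace.mk v x := by
  rw [FinitePlace.mk_apply, FinitePlace.norm_embedding']
  by_cases hx : v.valuation L x = 0
  · simp [placeNorm, hx]
  · simp [placeNorm, hx, WithZeroMulInt.toNNReal_neg_apply]

theorem placeNorm_pos {x : L} (hx : x ≠ 0) (ν : InfinitePlace L ⊕ HeightOneSpectrum (𝓞 L)) :
    0 < placeNorm L ν x := by
  rcases ν with w | v
  · exact pow_pos (InfinitePlace.pos_iff.mpr hx) _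
  · rw [placeNorm_inr_eq_finitePlace]
    exact FinitePlace.pos_iff.mpr hx

theorem placeNorm_inv (ν : InfinitePlace L ⊕ HeightOneSpectrum (𝓞 L)) (x : L) :
    placeNorm L ν x⁻¹ = (placeNorm L ν x)⁻¹ := by
  rcases ν with w | v
  · exact (congrArg (· ^ w.mult) (map_inv₀ w x)).trans (inv_pow _ _)
  · simp only [placeNorm_inr_eq_finitePlace, map_inv₀]

theorem placeNorm_inr_eq_one {v : HeightOneSpectrum (𝓞 L)} {x : L} (hx : v.valuation L x = 1) :
    placeNorm L (.inr v) x = 1 := by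
  rw [placeNorm_inr_eq_finitePlace, FinitePlace.mk_apply, FinitePlace.norm_embedding', hx,
    map_one, NNReal.coe_one]

variable {𝔖 : Finset (HeightOneSpectrum (𝓞 L))} {ε : L}

theorem placeNorm_eq_one_of_notMem_disjSum
    (hunit : ∀ v : HeightOneSpectrum (𝓞 L), v ∉ 𝔖 → v.valuation L ε = 1)
    {ν : InfinitePlace L ⊕ HeightOneSpectrum (𝓞 L)} (hν : ν ∉ Finset.univ.disjSum 𝔖) :
    placeNorm L ν ε = 1 := by
  rcases ν with w | v
  · exact absurd (Finset.inl_mem_disjSum.mpr (Finset.mem_univ w)) hν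
  · exact placeNorm_inr_eq_one (hunit v (mt Finset.inr_mem_disjSum.mpr hν))

theorem prod_placeNorm_disjSum_eq_one (hε : ε ≠ 0)
    (hunit : ∀ v : HeightOneSpectrum (𝓞 L), v ∉ 𝔖 → v.valuation L ε = 1) :
    ∏ ν ∈ Finset.univ.disjSum 𝔖, placeNorm L ν ε = 1 := by
  have hfin : ∏ᶠ v : HeightOneSpectrum (𝓞 L), placeNorm L (.inr v) ε =
      ∏ v ∈ 𝔖, placeNorm L (.inr v) ε := by
    refine finprod_eq_prod_of_mulSupport_subset _ fun v hv => ?_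
    by_contra hv𝔖
    exact hv (placeNorm_inr_eq_one (hunit v hv𝔖))
  rw [Finset.prod_disjSum, ← hfin, ← prod_abs_eq_one hε,
    ← finprod_comp_equiv FinitePlace.equivHeightOneSpectrum.symm]
  simp only [placeNorm_inr_eq_finitePlace]
  rfl

theorem absLogHeight_eq_sum_of_placeNorm_eq_one {x : L}
    {S : Finset (InfinitePlace L ⊕ HeightOneSpectrum (𝓞 L))}
    (hS : ∀ ν, ν ∉ S → placeNorm L ν x = 1) :
    absLogHeight L x = (Module.finrank ℚ L : ℝ)⁻¹ * ∑ ν ∈ S, Real.log (max 1 (placeNorm L ν x)) := by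
  rw [absLogHeight, finsum_eq_sum_of_support_subset]
  intro ν hν
  by_contra hνS
  exact hν (by simp only [hS ν hνS, max_self, Real.log_one])

end placeNorm

/-- Let `𝔖` be a finite set of finite places of `L` and `ε` an `𝔖`-unit. If `η` is a
place of `L` at which `‖ε‖_η` is minimal among all places, then `‖ε‖_η ≤ 1` and
`h(ε) ≤ ((#M_L^∞ + #𝔖)/D) · log ‖ε⁻¹‖_η`. -/
theorem height_le_of_minimal_place (L : Type*) [Field L] [NumberField L]
    (𝔖 : Finset (HeightOneSpectrum (𝓞 L))) (ε : L) (hε : ε ≠ 0)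
    (hSunit : ∀ v : HeightOneSpectrum (𝓞 L), v ∉ 𝔖 → v.valuation L ε = 1)
    (η : InfinitePlace L ⊕ HeightOneSpectrum (𝓞 L))
    (hη : ∀ ν : InfinitePlace L ⊕ HeightOneSpectrum (𝓞 L),
      placeNorm L η ε ≤ placeNorm L ν ε) :
    placeNorm L η ε ≤ 1 ∧
      absLogHeight L ε ≤
        ((Fintype.card (InfinitePlace L) + 𝔖.card : ℝ) / (Module.finrank ℚ L)) *
          Real.log (placeNorm L η ε⁻¹) := by
  set S := (Finset.univ : Finset (InfinitePlace L)).disjSum 𝔖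
  have hprod : ∏ ν ∈ S, placeNorm L ν ε = 1 := prod_placeNorm_disjSum_eq_one hε hSunit
  have hS : S.Nonempty :=
    ⟨.inl (Classical.arbitrary _), Finset.inl_mem_disjSum.mpr (Finset.mem_univ _)⟩
  have hη₁ : placeNorm L η ε ≤ 1 :=
    Finset.le_one_of_forall_le_of_prod_eq_one hS (placeNorm_pos hε η).le (fun ν _ => hη ν) hprod
  refine ⟨hη₁, ?_⟩
  have hsum := Finset.sum_log_max_one_le_card_mul_log_inv (placeNorm_pos hε η) hη₁
    (fun ν _ => hη ν) hprod
  rw [absLogHeight_eq_sum_of_placeNorm_eq_one fun ν => placeNorm_eq_one_of_notMem_disjSum hSunit,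
    placeNorm_inv, div_eq_inv_mul, mul_assoc]
  refine mul_le_mul_of_nonneg_left ?_ (by positivity)
  simpa only [S, Finset.card_disjSum, Finset.card_univ, Nat.cast_add] using hsum
end
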